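/- (Carlitz connection formula) For every natural number k and every real number u, u^k = Σ_{i=0}^{k} δ_i^{(k)} q_i(u), where δ_i^{(k)} = ((k+1)!/2^k) · (−1)^{k−i} (2i)! / ((k−i)! · i! · (2i+1−k)!) if (k−1)/2 ≤ i ≤ k, and δ_i^{(k)} = 0 if 0 ≤ i < (k−1)/2. -/

import Mathlib

/-!
Induction on `k` in steps of two. The Bessel polynomials satisfy
`u² q_i = (2i+1)(2i+3) (q_{i+2} - q_{i+1})`, so multiplying the formula for `u^k` by `u²` and
summing by parts writes `u^{k+2}` in the `q_i` with coefficients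
`(2i-3)(2i-1) δ_{i-2}^{(k)} - (2i-1)(2i+1) δ_{i-1}^{(k)}`, and these are the `δ_i^{(k+2)}`.
Both coefficient recurrences become identities of rational functions, with no boundary cases,
once `1/n!` is extended by zero to negative integers.
-/

open Finset

/-- The Bessel polynomial `q_n`, normalized so that `q_n(0) = 1`. -/
noncomputable def besselQ (n : ℕ) (u : ℝ) : ℝ :=
  ∑ k ∈ Finset.range (n + 1),
    ((n.factorial : ℝ) * (2 * n - k).factorial * 2 ^ k) /
      ((2 * n).factorial * (n - k).factorial * k.factorial) * u ^ k

/-- The Pochhammer symbol `(x)_j = x (x+1) ⋯ (x+j-1)`. -/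
noncomputable def poch (x : ℝ) (j : ℕ) : ℝ := ∏ i ∈ Finset.range j, (x + i)

/-- Generalized binomial coefficient with integer (possibly negative) upper entry. -/
noncomputable def gbinom (z : ℤ) (j : ℕ) : ℝ :=
  (∏ i ∈ Finset.range j, ((z : ℝ) - i)) / j.factorial

/-- The Carlitz connection coefficients `δ_i^{(k)}`. -/
noncomputable def carlitzDelta (i k : ℕ) : ℝ :=
  if i ≤ k ∧ k ≤ 2 * i + 1 then
    ((k + 1).factorial / 2 ^ k : ℝ) *
      ((-1 : ℝ) ^ (k - i) * (2 * i).factorial /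
        ((k - i).factorial * i.factorial * (2 * i + 1 - k).factorial))
  else 0

noncomputable def invFactorial (n : ℤ) : ℝ :=
  if n < 0 then 0 else ((n.toNat).factorial : ℝ)⁻¹

@[simp]
theorem invFactorial_natCast (n : ℕ) : invFactorial n = (n.factorial : ℝ)⁻¹ := by
  simp [invFactorial]

theorem invFactorial_of_neg {n : ℤ} (hn : n < 0) : invFactorial n = 0 := if_pos hn

theorem invFactorial_sub_one (n : ℤ) : invFactorial (n - 1) = n * invFactorial n := by
  rcases lt_or_ge 0 n with hn | hn
  · obtain ⟨m, rfl⟩ : ∃ m : ℕ, n = m + 1 := ⟨n.toNat - 1, by omega⟩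
    rw [add_sub_cancel_right, ← Nat.cast_succ, invFactorial_natCast, invFactorial_natCast,
      Nat.factorial_succ]
    push_cast
    field_simp
  · rw [invFactorial_of_neg (by omega)]
    rcases hn.lt_or_eq with hn | rfl
    · rw [invFactorial_of_neg hn, mul_zero]
    · rw [Int.cast_zero, zero_mul]

theorem sum_range_mul_sub_by_parts {R : Type*} [CommRing R] (a q : ℕ → R) (n : ℕ) :
    ∑ i ∈ range n, a i * (q (i + 1) - q i) =
      ∑ i ∈ range n, (a i - a (i + 1)) * q (i + 1) + a n * q n - a 0 * q 0 := by
  induction n with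
  | zero => simp
  | succ n ih => rw [sum_range_succ, sum_range_succ, ih]; ring

noncomputable def besselCoeff (n j : ℕ) : ℝ :=
  n.factorial * (2 * n - j).factorial * 2 ^ j / ((2 * n).factorial * j.factorial) *
    invFactorial ((n : ℤ) - j)

theorem besselQ_eq_sum_besselCoeff {n N : ℕ} (hN : n + 1 ≤ N) (u : ℝ) :
    besselQ n u = ∑ j ∈ range N, besselCoeff n j * u ^ j := by
  have hrange : besselQ n u = ∑ j ∈ range (n + 1), besselCoeff n j * u ^ j := by
    refine sum_congr rfl fun j hj => ?_
    rw [besselCoeff, show (n : ℤ) - j = ((n - j : ℕ) : ℤ) by grind, invFactorial_natCast]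
    ring
  rw [hrange]
  refine sum_subset (range_subset_range.2 hN) fun j _ hj => ?_
  rw [besselCoeff, invFactorial_of_neg (by grind), mul_zero, zero_mul]

theorem besselCoeff_zero (n : ℕ) : besselCoeff n 0 = 1 := by
  simp only [besselCoeff, Nat.sub_zero, pow_zero, mul_one, Nat.factorial_zero, Nat.cast_one,
    Nat.cast_zero, sub_zero, invFactorial_natCast]
  field_simp

theorem besselCoeff_succ_one (n : ℕ) : besselCoeff (n + 1) 1 = 1 := by
  rw [besselCoeff, show 2 * (n + 1) - 1 = 2 * n + 1 by omega,
    show ((n + 1 : ℕ) : ℤ) - (1 : ℕ) = n by push_cast; ring]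
  simp only [Nat.factorial_succ, show 2 * (n + 1) = 2 * n + 1 + 1 by ring, invFactorial_natCast]
  push_cast
  field_simp
  ring

theorem besselCoeff_recurrence (j a : ℕ) :
    besselCoeff (j + a) j = (2 * (j + a) + 1) * (2 * (j + a) + 3) *
      (besselCoeff (j + a + 2) (j + 2) - besselCoeff (j + a + 1) (j + 2)) := by
  simp only [besselCoeff]
  rw [show 2 * (j + a) - j = j + 2 * a by omega,
    show 2 * (j + a + 2) - (j + 2) = j + 2 * a + 2 by omega,
    show 2 * (j + a + 1) - (j + 2) = j + 2 * a by omega,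
    show 2 * (j + a + 2) = 2 * (j + a) + 4 by ring, show 2 * (j + a + 1) = 2 * (j + a) + 2 by ring]
  push_cast
  rw [show (j : ℤ) + a - j = a by ring, show (j : ℤ) + a + 2 - (j + 2) = a by ring,
    show (j : ℤ) + a + 1 - (j + 2) = a - 1 by ring, invFactorial_sub_one]
  simp only [Nat.factorial_succ]
  push_cast
  field_simp
  ring

theorem besselQ_recurrence (i : ℕ) (u : ℝ) :
    u ^ 2 * besselQ i u =
      (2 * i + 1) * (2 * i + 3) * (besselQ (i + 2) u - besselQ (i + 1) u) := by
  rw [besselQ_eq_sum_besselCoeff le_rfl, besselQ_eq_sum_besselCoeff (N := i + 3) le_rfl,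
    besselQ_eq_sum_besselCoeff (N := i + 3) (by omega), ← sum_sub_distrib,
    sum_range_succ' _ (i + 2), sum_range_succ' _ (i + 1), besselCoeff_zero, besselCoeff_zero,
    besselCoeff_succ_one, besselCoeff_succ_one, sub_self, sub_self, add_zero, add_zero,
    mul_sum, mul_sum]
  refine sum_congr rfl fun j hj => ?_
  obtain ⟨a, rfl⟩ := Nat.exists_eq_add_of_le (Nat.lt_succ_iff.1 (mem_range.1 hj))
  rw [besselCoeff_recurrence]
  push_cast
  ring

theorem carlitzDelta_eq (i k : ℕ) :
    carlitzDelta i k = (k + 1).factorial / 2 ^ k * (-1 : ℝ) ^ ((k : ℤ) - i) *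
      ((2 * i).factorial / i.factorial) * invFactorial ((k : ℤ) - i) *
        invFactorial (2 * (i : ℤ) + 1 - k) := by
  rw [carlitzDelta]
  split_ifs with h
  · rw [show (k : ℤ) - i = ((k - i : ℕ) : ℤ) by omega,
      show 2 * (i : ℤ) + 1 - k = ((2 * i + 1 - k : ℕ) : ℤ) by omega, zpow_natCast,
      invFactorial_natCast, invFactorial_natCast]
    field_simp
  · rcases Nat.lt_or_ge k i with hk | hk
    · rw [invFactorial_of_neg (by omega), mul_zero, zero_mul]
    · rw [invFactorial_of_neg (n := 2 * (i : ℤ) + 1 - k) (by omega), mul_zero]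

theorem carlitzDelta_recurrence (m k : ℕ) :
    carlitzDelta (m + 2) (k + 2) = (2 * m + 1) * (2 * m + 3) * carlitzDelta m k -
      (2 * m + 3) * (2 * m + 5) * carlitzDelta (m + 1) k := by
  simp only [carlitzDelta_eq]
  push_cast
  rw [show (k : ℤ) + 2 - (m + 2) = k - m by ring, show (k : ℤ) - (m + 1) = k - m - 1 by ring,
    show 2 * ((m : ℤ) + 2) + 1 - (k + 2) = 2 * m + 3 - k by ring,
    show 2 * ((m : ℤ) + 1) + 1 - k = 2 * m + 3 - k by ring,
    show 2 * (m : ℤ) + 1 - k = 2 * m + 3 - k - 1 - 1 by ring,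
    invFactorial_sub_one, invFactorial_sub_one, invFactorial_sub_one,
    zpow_sub_one₀ (by norm_num : (-1 : ℝ) ≠ 0)]
  rw [show 2 * (m + 2) = 2 * m + 4 by ring, show 2 * (m + 1) = 2 * m + 2 by ring]
  simp only [Nat.factorial_succ]
  push_cast
  field_simp
  ring

theorem carlitzDelta_zero_add_two (k : ℕ) : carlitzDelta 0 (k + 2) = 0 :=
  if_neg (by omega)

theorem carlitzDelta_one_add_two (k : ℕ) : carlitzDelta 1 (k + 2) = -3 * carlitzDelta 0 k := by
  match k with
  | 0 => norm_num [carlitzDelta, Nat.factorial]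
  | 1 => norm_num [carlitzDelta, Nat.factorial]
  | k + 2 => rw [carlitzDelta, carlitzDelta, if_neg (by omega), if_neg (by omega), mul_zero]

theorem carlitzDelta_succ_self (k : ℕ) : carlitzDelta (k + 1) k = 0 :=
  if_neg (by omega)

theorem carlitz_connection_formula (k : ℕ) (u : ℝ) :
    u ^ k = ∑ i ∈ Finset.range (k + 1), carlitzDelta i k * besselQ i u := by
  induction k using Nat.twoStepInduction with
  | zero => simp [besselQ, carlitzDelta]
  | one => norm_num [besselQ, carlitzDelta, sum_range_succ, Nat.factorial]
  | more k ih _ =>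
    let a (i : ℕ) : ℝ := (2 * i + 1) * (2 * i + 3) * carlitzDelta i k
    calc u ^ (k + 2) = ∑ i ∈ range (k + 1), carlitzDelta i k * (u ^ 2 * besselQ i u) := by
          rw [pow_add, ih, sum_mul]
          exact sum_congr rfl fun i _ => by ring
      _ = ∑ i ∈ range (k + 1), a i * (besselQ (i + 2) u - besselQ (i + 1) u) := by
          refine sum_congr rfl fun i _ => ?_
          rw [besselQ_recurrence]
          ring
      _ = ∑ i ∈ range (k + 1), (a i - a (i + 1)) * besselQ (i + 2) u +
            a (k + 1) * besselQ (k + 2) u - a 0 * besselQ 1 u :=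
          sum_range_mul_sub_by_parts a (fun i => besselQ (i + 1) u) (k + 1)
      _ = ∑ i ∈ range (k + 3), carlitzDelta i (k + 2) * besselQ i u := by
          have hδ : ∀ i ∈ range (k + 1), (a i - a (i + 1)) * besselQ (i + 2) u =
              carlitzDelta (i + 1 + 1) (k + 2) * besselQ (i + 1 + 1) u := fun i _ => by
            simp only [a, carlitzDelta_recurrence]
            push_cast
            ring
          rw [sum_congr rfl hδ, sum_range_succ' _ (k + 2), sum_range_succ' _ (k + 1),
            carlitzDelta_zero_add_two, carlitzDelta_one_add_two]
          simp only [a, carlitzDelta_succ_self]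
          ring
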